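/- Let N ≥ 1, m ≥ 0, and let a = (a_1,…,a_N) be an N-tuple of nonnegative integers summing to m with max_j a_j − min_j a_j ≤ 1. Then for every N-tuple b of nonnegative integers summing to m and every 1 ≤ k ≤ N, one has r_k(b) ≤ r_k(a), where r_k(c) denotes the minimum of c_{i_1}+⋯+c_{i_k} over all subsets {i_1 < ⋯ < i_k} of {1,…,N} of size k. -/

import Mathlib

/-- `rmin N c k` is the minimum of the sums of `k` distinct entries of `c`. -/
noncomputable def rmin (N : ℕ) (c : Fin N → ℕ) (k : ℕ) : ℕ :=
  sInf {x | ∃ s : Finset (Fin N), s.card = k ∧ ∑ i ∈ s, c i = x}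

/-! The minimal `k`-sum `rmin b k` is realised by a set `T` of `k` smallest entries. If it exceeded
`rmin a k ≥ k q`, where `a` takes only the values `q` and `q + 1`, some entry of `T` would be at
least `q + 1`, hence so would every entry outside `T`; then `m ≥ rmin b k + (N - k)(q + 1)`, while
`m ≤ rmin a k + (N - k)(q + 1)` because every entry of `a` is at most `q + 1`. -/

theorem exists_forall_le_and_le_add_one {ι : Type*} {a : ι → ℕ} (h : ∀ i j, a i ≤ a j + 1) :
    ∃ v, ∀ i, v ≤ a i ∧ a i ≤ v + 1 := by
  refine ⟨sInf (Set.range a), fun i => ⟨Nat.sInf_le ⟨i, rfl⟩, ?_⟩⟩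
  obtain ⟨j, hj⟩ := Nat.sInf_mem (⟨a i, i, rfl⟩ : (Set.range a).Nonempty)
  exact hj ▸ h i j

namespace rmin

variable {N k : ℕ} {c : Fin N → ℕ}

theorem le_sum {s : Finset (Fin N)} (hs : s.card = k) : rmin N c k ≤ ∑ i ∈ s, c i :=
  Nat.sInf_le ⟨s, hs, rfl⟩

theorem exists_sum_eq (hk : k ≤ N) :
    ∃ T : Finset (Fin N), T.card = k ∧ ∑ i ∈ T, c i = rmin N c k := by
  obtain ⟨s, -, hs⟩ := Finset.exists_subset_card_eq (s := (Finset.univ : Finset (Fin N)))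
    (by simpa using hk)
  exact Nat.sInf_mem (s := {x | ∃ s : Finset (Fin N), s.card = k ∧ ∑ i ∈ s, c i = x})
    ⟨_, s, hs, rfl⟩

theorem mul_le {v : ℕ} (hv : ∀ i, v ≤ c i) (hk : k ≤ N) : k * v ≤ rmin N c k := by
  obtain ⟨T, hT, hsum⟩ := exists_sum_eq (c := c) hk
  rw [← hsum, ← hT, ← smul_eq_mul, ← Finset.sum_const]
  exact Finset.sum_le_sum fun i _ => hv i

theorem sum_le_add {w : ℕ} (hw : ∀ i, c i ≤ w) (hk : k ≤ N) :
    ∑ i, c i ≤ rmin N c k + (N - k) * w := by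
  obtain ⟨T, hT, hsum⟩ := exists_sum_eq (c := c) hk
  have hcompl : ∑ i ∈ Tᶜ, c i ≤ (N - k) * w := by
    calc ∑ i ∈ Tᶜ, c i ≤ ∑ _i ∈ Tᶜ, w := Finset.sum_le_sum fun i _ => hw i
      _ = (N - k) * w := by simp [Finset.card_compl, hT]
  rw [← Finset.sum_add_sum_compl T, hsum]
  omega

theorem le_of_sum_eq {T : Finset (Fin N)} (hT : T.card = k) (hsum : ∑ i ∈ T, c i = rmin N c k)
    {i j : Fin N} (hi : i ∈ T) (hj : j ∉ T) : c i ≤ c j := by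
  have hj' : j ∉ T.erase i := fun h => hj (Finset.mem_of_mem_erase h)
  have hcard : (insert j (T.erase i)).card = k := by
    rw [Finset.card_insert_of_notMem hj', Finset.card_erase_of_mem hi, hT]
    have := Finset.card_pos.mpr ⟨i, hi⟩
    omega
  have hle := le_sum (c := c) hcard
  rw [Finset.sum_insert hj', ← hsum, ← Finset.sum_erase_add T c hi] at hle
  omega

theorem add_le_sum {v : ℕ} (hk : k ≤ N) (hv : k * v < rmin N c k) :
    rmin N c k + (N - k) * (v + 1) ≤ ∑ i, c i := by
  obtain ⟨T, hT, hsum⟩ := exists_sum_eq (c := c) hk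
  obtain ⟨i, hi, hci⟩ : ∃ i ∈ T, v < c i := by
    by_contra! hsmall
    have : ∑ i ∈ T, c i ≤ ∑ _i ∈ T, v := Finset.sum_le_sum hsmall
    simp only [Finset.sum_const, smul_eq_mul, hT, hsum] at this
    omega
  have hcompl : (N - k) * (v + 1) ≤ ∑ j ∈ Tᶜ, c j := by
    calc (N - k) * (v + 1) = ∑ _j ∈ Tᶜ, (v + 1) := by simp [Finset.card_compl, hT]
      _ ≤ ∑ j ∈ Tᶜ, c j := Finset.sum_le_sum fun j hj =>
          hci.trans_le (le_of_sum_eq hT hsum hi (Finset.mem_compl.mp hj))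
  rw [← Finset.sum_add_sum_compl T, hsum]
  omega

end rmin

theorem stmt_2_general (N m : ℕ) (a : Fin N → ℕ)
    (ha : ∑ i, a i = m) (hamax : ∀ i j, a i ≤ a j + 1) :
    ∀ b : Fin N → ℕ, (∑ i, b i = m) →
      ∀ k, 1 ≤ k → k ≤ N → rmin N b k ≤ rmin N a k := by
  intro b hb k _ hkN
  obtain ⟨q, hq⟩ := exists_forall_le_and_le_add_one hamax
  by_contra! hlt
  have hlow := rmin.mul_le (fun i => (hq i).1) hkN
  have hsum_a := rmin.sum_le_add (fun i => (hq i).2) hkN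
  have hsum_b := rmin.add_le_sum hkN (hlow.trans_lt hlt)
  omega

/-- A tuple whose entries pairwise differ by at most one is maximal for the order
given by comparing all the `r_k`. -/
theorem stmt_2 (N m : ℕ) (hN : 1 ≤ N) (a : Fin N → ℕ)
    (ha : ∑ i, a i = m) (hamax : ∀ i j, a i ≤ a j + 1) :
    ∀ b : Fin N → ℕ, (∑ i, b i = m) →
      ∀ k, 1 ≤ k → k ≤ N → rmin N b k ≤ rmin N a k :=
  stmt_2_general N m a ha hamax
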